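/- arXiv:1707.04491 — 4 statements merged into one kernel-verified Lean document; each statement's English description precedes it below -/
import Mathlib

section
/- Under the continuous-time consensus dynamics with symmetric time-varying coupling weights that are uniformly bounded above and below by positive constants on every edge, every node's state converges as t → ∞ to the average of the initial states: lim_{t→∞} x_i(t) = (1/n) Σ_{j=1}^n x_j(0) for every node i. -/
/-!
Symmetric couplings make the flow along each edge antisymmetric, so `∑ i, x_i` is conserved and
the average `m` of the initial states stays the average of the current ones. Along the dynamics
`V = ∑ i, (x_i - m)²` has derivative `-∑ a_ij (x_j - x_i)²`, summed over ordered edges, which is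
at most `-δ` times the Dirichlet energy of `x`. On a connected graph with `n` vertices, any two states
differ by at most `n` edge increments, so `V ≤ n³ · energy` (a discrete Poincaré inequality).
Hence `V' ≤ -(δ / n³) V`, `V` decays exponentially, and every `x_i` tends to `m`.
-/

open Filter Topology Finset

theorem abs_sub_average_le_of_abs_sub_le {ι : Type*} [Fintype ι] {y : ι → ℝ} {D : ℝ}
    (hD : ∀ i j, |y i - y j| ≤ D) (i : ι) :
    |y i - (∑ j, y j) / Fintype.card ι| ≤ D := by
  have hcard : (0 : ℝ) < Fintype.card ι := by
    exact_mod_cast Fintype.card_pos_iff.2 ⟨i⟩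
  have hsum : y i - (∑ j, y j) / Fintype.card ι = (∑ j, (y i - y j)) / Fintype.card ι := by
    rw [sum_sub_distrib, sum_const, card_univ, nsmul_eq_mul]
    field_simp
  rw [hsum, abs_div, abs_of_pos hcard, div_le_iff₀ hcard]
  calc |∑ j, (y i - y j)| ≤ ∑ j, |y i - y j| := abs_sum_le_sum_abs _ _
    _ ≤ ∑ _j : ι, D := sum_le_sum fun j _ => hD i j
    _ = D * Fintype.card ι := by rw [sum_const, card_univ, nsmul_eq_mul, mul_comm]

theorem le_mul_exp_of_hasDerivAt_le_neg_mul {f f' : ℝ → ℝ} {k : ℝ}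
    (hf : ∀ t, 0 ≤ t → HasDerivAt f (f' t) t) (hle : ∀ t, 0 ≤ t → f' t ≤ -k * f t)
    {t : ℝ} (ht : 0 ≤ t) : f t ≤ f 0 * Real.exp (-k * t) := by
  have hg : ∀ s, 0 ≤ s → HasDerivAt (fun s => Real.exp (k * s) * f s)
      (Real.exp (k * s) * (f' s + k * f s)) s := by
    intro s hs
    exact (((hasDerivAt_id' s).const_mul k).exp.fun_mul (hf s hs)).congr_deriv (by ring)
  have hanti : AntitoneOn (fun s => Real.exp (k * s) * f s) (Set.Ici 0) := by
    refine antitoneOn_of_hasDerivWithinAt_nonpos (convex_Ici 0)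
      (fun s hs => (hg s hs).continuousAt.continuousWithinAt)
      (fun s hs => (hg s (interior_subset hs)).hasDerivWithinAt) fun s hs => ?_
    have hs : 0 ≤ s := interior_subset hs
    exact mul_nonpos_of_nonneg_of_nonpos (Real.exp_pos _).le (by linarith [hle s hs])
  have h := hanti Set.self_mem_Ici ht ht
  simp only [mul_zero, Real.exp_zero, one_mul] at h
  rw [neg_mul, Real.exp_neg, ← div_eq_mul_inv, le_div_iff₀ (Real.exp_pos _), mul_comm]
  exact h

theorem tendsto_zero_of_hasDerivAt_le_neg_mul {f f' : ℝ → ℝ} {k : ℝ} (hk : 0 < k)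
    (hf : ∀ t, 0 ≤ t → HasDerivAt f (f' t) t) (hle : ∀ t, 0 ≤ t → f' t ≤ -k * f t)
    (hf₀ : ∀ t, 0 ≤ f t) : Tendsto f atTop (𝓝 0) := by
  have hexp : Tendsto (fun t => f 0 * Real.exp (-k * t)) atTop (𝓝 0) := by
    simpa using ((Real.tendsto_exp_atBot.comp
      (tendsto_id.const_mul_atTop_of_neg (neg_neg_of_pos hk))).const_mul (f 0))
  refine tendsto_of_tendsto_of_tendsto_of_le_of_le' tendsto_const_nhds hexp
    (Eventually.of_forall hf₀) ?_
  filter_upwards [eventually_ge_atTop 0] with t ht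
  exact le_mul_exp_of_hasDerivAt_le_neg_mul hf hle ht

theorem tendsto_nhds_of_sum_sq_sub_tendsto_zero {α ι : Type*} [Fintype ι] {l : Filter α}
    {x : α → ι → ℝ} {c : ℝ} (h : Tendsto (fun t => ∑ i, (x t i - c) ^ 2) l (𝓝 0)) (i : ι) :
    Tendsto (fun t => x t i) l (𝓝 c) := by
  rw [tendsto_iff_norm_sub_tendsto_zero]
  have hsqrt : Tendsto (fun t => √(∑ i, (x t i - c) ^ 2)) l (𝓝 0) := by
    simpa using h.sqrt
  refine squeeze_zero (fun t => norm_nonneg _) (fun t => Real.abs_le_sqrt ?_) hsqrt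
  exact single_le_sum (f := fun j => (x t j - c) ^ 2) (fun j _ => sq_nonneg _) (mem_univ i)

namespace SimpleGraph

variable {V : Type*} [Fintype V] (G : SimpleGraph V) [DecidableRel G.Adj]

def consensusField (w : V → V → ℝ) (y : V → ℝ) (i : V) : ℝ :=
  ∑ j ∈ G.neighborFinset i, w i j * (y j - y i)

def dirichletEnergy (w : V → V → ℝ) (y : V → ℝ) : ℝ :=
  ∑ i, ∑ j ∈ G.neighborFinset i, w i j * (y j - y i) ^ 2

theorem sum_sum_neighborFinset_comm (f : V → V → ℝ) :
    ∑ i, ∑ j ∈ G.neighborFinset i, f i j = ∑ i, ∑ j ∈ G.neighborFinset i, f j i :=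
  sum_comm' fun i j => by simp [G.adj_comm]

variable {G} {w : V → V → ℝ}

theorem sum_consensusField_eq_zero (hw : ∀ i j, G.Adj i j → w i j = w j i) (y : V → ℝ) :
    ∑ i, G.consensusField w y i = 0 := by
  have hanti : ∀ i, ∀ j ∈ G.neighborFinset i,
      w j i * (y i - y j) = -(w i j * (y j - y i)) := fun i j hj => by
    rw [hw j i (G.adj_symm ((G.mem_neighborFinset i j).1 hj))]; ring
  have h := G.sum_sum_neighborFinset_comm fun i j => w i j * (y j - y i)
  simp only [fun i => sum_congr rfl (hanti i), sum_neg_distrib] at h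
  simp only [consensusField]
  linarith

theorem sum_mul_consensusField (hw : ∀ i j, G.Adj i j → w i j = w j i) (y : V → ℝ) (c : ℝ) :
    ∑ i, (y i - c) * G.consensusField w y i = -(G.dirichletEnergy w y / 2) := by
  have hpair : ∀ i, ∀ j ∈ G.neighborFinset i,
      (y i - c) * (w i j * (y j - y i)) + (y j - c) * (w j i * (y i - y j)) =
        -(w i j * (y j - y i) ^ 2) := fun i j hj => by
    rw [hw j i (G.adj_symm ((G.mem_neighborFinset i j).1 hj))]; ring
  have h := G.sum_sum_neighborFinset_comm fun i j => (y i - c) * (w i j * (y j - y i))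
  have hsum := sum_congr rfl fun i (_ : i ∈ univ) => sum_congr rfl (hpair i)
  simp only [sum_add_distrib, sum_neg_distrib, ← h] at hsum
  simp only [consensusField, dirichletEnergy, mul_sum]
  linarith

theorem mul_dirichletEnergy_one_le {δ : ℝ} (hw : ∀ i j, G.Adj i j → δ ≤ w i j) (y : V → ℝ) :
    δ * G.dirichletEnergy 1 y ≤ G.dirichletEnergy w y := by
  simp only [dirichletEnergy, Pi.one_apply, one_mul, mul_sum]
  exact sum_le_sum fun i _ => sum_le_sum fun j hj =>
    mul_le_mul_of_nonneg_right (hw i j ((G.mem_neighborFinset i j).1 hj)) (sq_nonneg _)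

theorem sq_sub_le_dirichletEnergy_one (y : V → ℝ) {u v : V} (h : G.Adj u v) :
    (y u - y v) ^ 2 ≤ G.dirichletEnergy 1 y := by
  have hnonneg : ∀ i, ∀ j ∈ G.neighborFinset i, 0 ≤ (1 : V → V → ℝ) i j * (y j - y i) ^ 2 :=
    fun i j _ => by simp [sq_nonneg]
  calc (y u - y v) ^ 2 = (1 : V → V → ℝ) v u * (y u - y v) ^ 2 := by simp
    _ ≤ ∑ j ∈ G.neighborFinset v, (1 : V → V → ℝ) v j * (y j - y v) ^ 2 :=
      single_le_sum (hnonneg v) ((G.mem_neighborFinset v u).2 h.symm)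
    _ ≤ G.dirichletEnergy 1 y :=
      single_le_sum (fun i _ => sum_nonneg (hnonneg i)) (mem_univ v)

theorem abs_sub_le_length_mul_sqrt_dirichletEnergy_one (y : V → ℝ) {u v : V} (p : G.Walk u v) :
    |y u - y v| ≤ p.length * √(G.dirichletEnergy 1 y) := by
  induction p with
  | nil => simp
  | @cons u z v h q ih =>
    calc |y u - y v| ≤ |y u - y z| + |y z - y v| := abs_sub_le _ _ _
      _ ≤ √(G.dirichletEnergy 1 y) + q.length * √(G.dirichletEnergy 1 y) :=
        add_le_add (Real.abs_le_sqrt (sq_sub_le_dirichletEnergy_one y h)) ih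
      _ = (q.cons h).length * √(G.dirichletEnergy 1 y) := by
        rw [Walk.length_cons]; push_cast; ring

theorem Connected.sum_sq_sub_average_le (hG : G.Connected) (y : V → ℝ) :
    ∑ i, (y i - (∑ j, y j) / Fintype.card V) ^ 2 ≤
      Fintype.card V ^ 3 * G.dirichletEnergy 1 y := by
  have hdiff : ∀ i j, |y i - y j| ≤ Fintype.card V * √(G.dirichletEnergy 1 y) := fun i j => by
    classical
    obtain ⟨p, hp⟩ := (hG.preconnected i j).some.toPath
    refine (abs_sub_le_length_mul_sqrt_dirichletEnergy_one y p).trans ?_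
    gcongr
    exact_mod_cast hp.length_lt.le
  have hE : 0 ≤ G.dirichletEnergy 1 y :=
    sum_nonneg fun i _ => sum_nonneg fun j _ => by simp [sq_nonneg]
  calc ∑ i, (y i - (∑ j, y j) / Fintype.card V) ^ 2
      ≤ ∑ _i : V, (Fintype.card V * √(G.dirichletEnergy 1 y)) ^ 2 :=
        sum_le_sum fun i _ => sq_le_sq' (abs_le.1 (abs_sub_average_le_of_abs_sub_le hdiff i)).1
          (abs_le.1 (abs_sub_average_le_of_abs_sub_le hdiff i)).2
    _ = Fintype.card V ^ 3 * G.dirichletEnergy 1 y := by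
        rw [sum_const, card_univ, nsmul_eq_mul, mul_pow, Real.sq_sqrt hE]; ring

variable {x : ℝ → V → ℝ} {a : V → V → ℝ → ℝ}

theorem sum_eq_sum_zero_of_hasDerivAt_consensusField
    (hsymm : ∀ t, 0 ≤ t → ∀ i j, G.Adj i j → a i j t = a j i t)
    (hdyn : ∀ i, ∀ t, 0 ≤ t →
      HasDerivAt (fun s => x s i) (G.consensusField (fun i j => a i j t) (x t) i) t)
    {t : ℝ} (ht : 0 ≤ t) : ∑ i, x t i = ∑ i, x 0 i := by
  have hsum : ∀ s, 0 ≤ s → HasDerivAt (fun s => ∑ i, x s i) 0 s := fun s hs => by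
    simpa [sum_consensusField_eq_zero (hsymm s hs)] using
      HasDerivAt.fun_sum fun i (_ : i ∈ univ) => hdyn i s hs
  exact constant_of_has_deriv_right_zero
    (fun s hs => (hsum s hs.1).continuousAt.continuousWithinAt)
    (fun s hs => (hsum s hs.1).hasDerivWithinAt) t ⟨ht, le_rfl⟩

theorem hasDerivAt_sum_sq_sub_of_hasDerivAt_consensusField
    (hsymm : ∀ t, 0 ≤ t → ∀ i j, G.Adj i j → a i j t = a j i t)
    (hdyn : ∀ i, ∀ t, 0 ≤ t →
      HasDerivAt (fun s => x s i) (G.consensusField (fun i j => a i j t) (x t) i) t)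
    (c t : ℝ) (ht : 0 ≤ t) :
    HasDerivAt (fun s => ∑ i, (x s i - c) ^ 2)
      (-G.dirichletEnergy (fun i j => a i j t) (x t)) t := by
  have h := HasDerivAt.fun_sum fun i (_ : i ∈ univ) => ((hdyn i t ht).sub_const c).fun_pow 2
  refine h.congr_deriv ?_
  have hfield := sum_mul_consensusField (hsymm t ht) (x t) c
  simp only [Nat.cast_ofNat, pow_one, Nat.add_one_sub_one, mul_assoc, ← mul_sum, hfield]
  ring

end SimpleGraph

theorem ct_average_consensus_general
    (n : ℕ)
    (G : SimpleGraph (Fin n)) [DecidableRel G.Adj]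
    (hconn : G.Connected)
    (x : ℝ → Fin n → ℝ)
    (a : Fin n → Fin n → ℝ → ℝ)
    (ha_symm : ∀ i j t, a i j t = a j i t)
    (δ abar : ℝ) (hδ : 0 < δ)
    (hbound : ∀ i j, G.Adj i j → ∀ t : ℝ, 0 ≤ t →
      δ ≤ a i j t ∧ a i j t ≤ abar)
    (hdyn : ∀ i, ∀ t : ℝ, 0 ≤ t →
      HasDerivAt (fun s => x s i)
        (∑ j ∈ G.neighborFinset i, a i j t * (x t j - x t i)) t) :
    ∀ i, Tendsto (fun t => x t i) atTop
      (𝓝 ((1 / (n : ℝ)) * ∑ j, x 0 j)) := by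
  have hsymm : ∀ t, 0 ≤ t → ∀ i j, G.Adj i j → a i j t = a j i t := fun t _ i j _ =>
    ha_symm i j t
  set m := (1 / (n : ℝ)) * ∑ j, x 0 j
  have hn_pos : (0 : ℝ) < n := by exact_mod_cast Fin.pos_iff_nonempty.2 hconn.nonempty
  have hdissipation : ∀ t, 0 ≤ t → -G.dirichletEnergy (fun i j => a i j t) (x t) ≤
      -(δ / n ^ 3) * ∑ i, (x t i - m) ^ 2 := fun t ht => by
    have hmean : (∑ j, x t j) / Fintype.card (Fin n) = m := by
      rw [SimpleGraph.sum_eq_sum_zero_of_hasDerivAt_consensusField hsymm hdyn ht,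
        Fintype.card_fin, div_eq_inv_mul, ← one_div]
    have hpoincare := hconn.sum_sq_sub_average_le (x t)
    rw [hmean, Fintype.card_fin] at hpoincare
    have henergy :=
      SimpleGraph.mul_dirichletEnergy_one_le (fun i j hij => (hbound i j hij t ht).1) (x t)
    rw [neg_mul, neg_le_neg_iff, div_mul_eq_mul_div, div_le_iff₀ (by positivity)]
    calc δ * ∑ i, (x t i - m) ^ 2 ≤ δ * (n ^ 3 * G.dirichletEnergy 1 (x t)) := by gcongr
      _ = n ^ 3 * (δ * G.dirichletEnergy 1 (x t)) := by ring
      _ ≤ G.dirichletEnergy (fun i j => a i j t) (x t) * n ^ 3 := by rw [mul_comm]; gcongr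
  exact tendsto_nhds_of_sum_sq_sub_tendsto_zero <|
    tendsto_zero_of_hasDerivAt_le_neg_mul (by positivity)
      (SimpleGraph.hasDerivAt_sum_sq_sub_of_hasDerivAt_consensusField hsymm hdyn m) hdissipation
      fun t => sum_nonneg fun i _ => sq_nonneg _

/-- Continuous-time average consensus with symmetric, uniformly bounded,
time-varying coupling weights: every node's state converges to the average
of the initial states. -/
theorem ct_average_consensus
    (n : ℕ) (hn : 2 ≤ n)
    (G : SimpleGraph (Fin n)) [DecidableRel G.Adj]
    (hconn : G.Connected)
    (x : ℝ → Fin n → ℝ)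
    (a : Fin n → Fin n → ℝ → ℝ)
    (ha_cont : ∀ i j, Continuous (a i j))
    (ha_symm : ∀ i j t, a i j t = a j i t)
    (δ abar : ℝ) (hδ : 0 < δ) (hδa : δ ≤ abar)
    (hbound : ∀ i j, G.Adj i j → ∀ t : ℝ, 0 ≤ t →
      δ ≤ a i j t ∧ a i j t ≤ abar)
    (hdyn : ∀ i, ∀ t : ℝ, 0 ≤ t →
      HasDerivAt (fun s => x s i)
        (∑ j ∈ G.neighborFinset i, a i j t * (x t j - x t i)) t) :
    ∀ i, Tendsto (fun t => x t i) atTop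
      (𝓝 ((1 / (n : ℝ)) * ∑ j, x 0 j)) :=
  ct_average_consensus_general n G hconn x a ha_symm δ abar hδ hbound hdyn
end

section
/- Under the discrete-time consensus update rule with symmetric time-varying weights bounded between positive constants δ and ā < 1 on every edge, and step size ε satisfying 0 < ε < 1/Δ where Δ is the maximum degree of the graph, every node's state converges as k → ∞ to the average of the initial states: lim_{k→∞} x_i[k] = (1/n) Σ_{j=1}^n x_j[0] for every node i. -/
/-!
Let `y = x - s`, `s` the initial average. Symmetry of the weights conserves `∑ i, x i`, so
`∑ i, y i = 0` throughout, and a step is `y ↦ y - L y` with `L` the Laplacian of the weights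
`w = ε a` on the edges. With `‖y‖² = ∑ y_i²`, `‖y - L y‖² = ‖y‖² - 2⟪y, L y⟫ + ‖L y‖²`, where
`2⟪y, L y⟫ = ∑ w_ij (y_i - y_j)²` is the Dirichlet form and, by Cauchy–Schwarz,
`‖L y‖² ≤ β · ∑ w_ij (y_i - y_j)²` for `β = ε ā Δ < 1` bounding the row sums of `w`. Since
`w ≥ ε δ` on edges, the Dirichlet form dominates `ε δ c ‖y‖²`, where `c > 0` is a spectral gap
of the connected graph on sum-zero vectors (a positive minimum of the graph Dirichlet form on a
compact sphere). Thus `‖y‖²` contracts by the factor `1 - (1 - β) ε δ c < 1` at every step.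
-/

open Filter Topology

theorem exists_pos_mul_sq_norm_le_of_homogeneous {E : Type*} [NormedAddCommGroup E]
    [NormedSpace ℝ E] [ProperSpace E] {S : Set E} (hS : IsClosed S)
    (hS_smul : ∀ (t : ℝ), ∀ y ∈ S, t • y ∈ S) {Q : E → ℝ} (hQ : Continuous Q)
    (hQ_smul : ∀ (t : ℝ) y, Q (t • y) = t ^ 2 * Q y) (hQ_pos : ∀ y ∈ S, y ≠ 0 → 0 < Q y) :
    ∃ c > 0, ∀ y ∈ S, c * ‖y‖ ^ 2 ≤ Q y := by
  have hK : IsCompact (S ∩ Metric.sphere 0 1) :=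
    (isCompact_sphere 0 1).inter_left hS
  obtain ⟨c, hc, hcK⟩ := hK.exists_forall_le' hQ.continuousOn (a := 0) fun y hy =>
    hQ_pos y hy.1 (ne_zero_of_mem_unit_sphere ⟨y, hy.2⟩)
  refine ⟨c, hc, fun y hy => ?_⟩
  rcases eq_or_ne y 0 with rfl | hy0
  · simpa using (hQ_smul 0 0).ge
  have hyn : ‖y‖ ≠ 0 := norm_ne_zero_iff.mpr hy0
  have hz : ‖y‖⁻¹ • y ∈ S ∩ Metric.sphere 0 1 :=
    ⟨hS_smul _ y hy, by simp [norm_smul, hyn]⟩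
  calc c * ‖y‖ ^ 2 ≤ ‖y‖ ^ 2 * Q (‖y‖⁻¹ • y) := by
        rw [mul_comm]; exact mul_le_mul_of_nonneg_left (hcK _ hz) (by positivity)
    _ = Q y := by rw [← hQ_smul, smul_smul, mul_inv_cancel₀ hyn, one_smul]

theorem sum_sq_le_card_mul_sq_norm {ι : Type*} [Fintype ι] (y : ι → ℝ) :
    ∑ i, y i ^ 2 ≤ Fintype.card ι * ‖y‖ ^ 2 := by
  calc ∑ i, y i ^ 2 ≤ ∑ _i : ι, ‖y‖ ^ 2 := by
        refine Finset.sum_le_sum fun i _ => ?_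
        rw [← sq_abs, ← Real.norm_eq_abs]
        exact pow_le_pow_left₀ (norm_nonneg _) (norm_le_pi_norm y i) 2
    _ = Fintype.card ι * ‖y‖ ^ 2 := by simp

theorem tendsto_zero_of_le_mul_of_lt_one {u : ℕ → ℝ} {r : ℝ} (hu : ∀ k, 0 ≤ u k) (hr : r < 1)
    (h : ∀ k, u (k + 1) ≤ r * u k) : Tendsto u atTop (𝓝 0) := by
  have hr₀ : 0 ≤ max r 0 := le_max_right _ _
  have hgeo : ∀ k, u k ≤ max r 0 ^ k * u 0 := fun k =>
    le_geom hr₀ k fun j _ => (h j).trans (mul_le_mul_of_nonneg_right (le_max_left _ _) (hu j))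
  refine squeeze_zero hu hgeo ?_
  simpa using (tendsto_pow_atTop_nhds_zero_of_lt_one hr₀ (max_lt hr one_pos)).mul_const (u 0)

section WeightedLaplacian

variable {ι : Type*} [Fintype ι]

def weightedLaplacian (w : ι → ι → ℝ) (y : ι → ℝ) (i : ι) : ℝ :=
  ∑ j, w i j * (y i - y j)

def dirichletForm (w : ι → ι → ℝ) (y : ι → ℝ) : ℝ :=
  ∑ i, ∑ j, w i j * (y i - y j) ^ 2

variable {w : ι → ι → ℝ}

theorem weightedLaplacian_sub_const (w : ι → ι → ℝ) (y : ι → ℝ) (s : ℝ) :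
    weightedLaplacian w (fun i => y i - s) = weightedLaplacian w y := by
  ext i
  simp only [weightedLaplacian, sub_sub_sub_cancel_right]

theorem sum_weightedLaplacian (hw : ∀ i j, w i j = w j i) (y : ι → ℝ) :
    ∑ i, weightedLaplacian w y i = 0 := by
  have h : ∑ i, ∑ j, w i j * (y i - y j) = ∑ i, ∑ j, -(w i j * (y i - y j)) := by
    rw [Finset.sum_comm]
    refine Finset.sum_congr rfl fun i _ => Finset.sum_congr rfl fun j _ => ?_
    rw [hw]; ring
  simp only [Finset.sum_neg_distrib] at h
  simp only [weightedLaplacian]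
  linarith

theorem two_mul_sum_mul_weightedLaplacian (hw : ∀ i j, w i j = w j i) (y : ι → ℝ) :
    2 * ∑ i, y i * weightedLaplacian w y i = dirichletForm w y := by
  have h : ∑ i, ∑ j, w i j * y j ^ 2 = ∑ i, ∑ j, w i j * y i ^ 2 := by
    rw [Finset.sum_comm]
    simp only [hw]
  calc 2 * ∑ i, y i * weightedLaplacian w y i
      = ∑ i, ∑ j, (w i j * (y i - y j) ^ 2 + w i j * y i ^ 2 - w i j * y j ^ 2) := by
        simp only [weightedLaplacian, Finset.mul_sum]
        exact Finset.sum_congr rfl fun i _ => Finset.sum_congr rfl fun j _ => by ring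
    _ = dirichletForm w y + ∑ i, ∑ j, w i j * y i ^ 2 - ∑ i, ∑ j, w i j * y j ^ 2 := by
        simp only [dirichletForm, Finset.sum_add_distrib, Finset.sum_sub_distrib]
    _ = dirichletForm w y := by rw [h]; ring

theorem sum_sq_weightedLaplacian_le (hw : ∀ i j, 0 ≤ w i j) {β : ℝ}
    (hrow : ∀ i, ∑ j, w i j ≤ β) (y : ι → ℝ) :
    ∑ i, weightedLaplacian w y i ^ 2 ≤ β * dirichletForm w y := by
  rw [dirichletForm, Finset.mul_sum]
  refine Finset.sum_le_sum fun i _ => ?_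
  calc weightedLaplacian w y i ^ 2
      ≤ (∑ j, w i j) * ∑ j, w i j * (y i - y j) ^ 2 :=
        Finset.sum_sq_le_sum_mul_sum_of_sq_le_mul _ (fun j _ => hw i j)
          (fun j _ => mul_nonneg (hw i j) (sq_nonneg _)) fun j _ => le_of_eq (by ring)
    _ ≤ β * ∑ j, w i j * (y i - y j) ^ 2 :=
        mul_le_mul_of_nonneg_right (hrow i)
          (Finset.sum_nonneg fun j _ => mul_nonneg (hw i j) (sq_nonneg _))

theorem sum_sq_sub_weightedLaplacian_le (hw_symm : ∀ i j, w i j = w j i)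
    (hw : ∀ i j, 0 ≤ w i j) {β : ℝ} (hrow : ∀ i, ∑ j, w i j ≤ β) (y : ι → ℝ) :
    ∑ i, (y i - weightedLaplacian w y i) ^ 2 ≤ ∑ i, y i ^ 2 - (1 - β) * dirichletForm w y := by
  have h := sum_sq_weightedLaplacian_le hw hrow y
  have h2 := two_mul_sum_mul_weightedLaplacian hw_symm y
  calc ∑ i, (y i - weightedLaplacian w y i) ^ 2
      = ∑ i, y i ^ 2 - 2 * ∑ i, y i * weightedLaplacian w y i
          + ∑ i, weightedLaplacian w y i ^ 2 := by
        simp only [sub_sq, Finset.sum_add_distrib, Finset.sum_sub_distrib, Finset.mul_sum]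
        ring_nf
    _ ≤ _ := by linarith

theorem mul_dirichletForm_le {v : ι → ι → ℝ} {η : ℝ} (h : ∀ i j, η * v i j ≤ w i j)
    (y : ι → ℝ) : η * dirichletForm v y ≤ dirichletForm w y := by
  simp only [dirichletForm, Finset.mul_sum, ← mul_assoc]
  gcongr with i _ j _
  exact h i j

theorem continuous_dirichletForm (w : ι → ι → ℝ) :
    Continuous (dirichletForm w) := by
  unfold dirichletForm
  fun_prop

theorem dirichletForm_smul (w : ι → ι → ℝ) (t : ℝ) (y : ι → ℝ) :
    dirichletForm w (t • y) = t ^ 2 * dirichletForm w y := by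
  simp only [dirichletForm, Pi.smul_apply, smul_eq_mul, ← mul_sub, mul_pow, Finset.mul_sum]
  exact Finset.sum_congr rfl fun i _ => Finset.sum_congr rfl fun j _ => by ring

end WeightedLaplacian

namespace SimpleGraph

theorem adjMatrix_nonneg {V : Type*} (G : SimpleGraph V) [DecidableRel G.Adj] (i j : V) :
    0 ≤ G.adjMatrix ℝ i j := by
  rw [adjMatrix_apply]
  split <;> norm_num

variable {V : Type*} [Fintype V] (G : SimpleGraph V) [DecidableRel G.Adj]

theorem dirichletForm_adjMatrix [DecidableEq V] (y : V → ℝ) :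
    dirichletForm (G.adjMatrix ℝ) y = 2 * Matrix.toLinearMap₂' ℝ (G.lapMatrix ℝ) y y := by
  rw [lapMatrix_toLinearMap₂', mul_div_cancel₀ _ two_ne_zero]
  simp only [dirichletForm, adjMatrix_apply, ite_mul, one_mul, zero_mul]

theorem sum_adjMatrix_mul_le_mul_maxDegree {f : V → ℝ} {b : ℝ} (hb : 0 ≤ b) {i : V}
    (hf : ∀ j, G.Adj i j → f j ≤ b) :
    ∑ j, G.adjMatrix ℝ i j * f j ≤ b * G.maxDegree := by
  calc ∑ j, G.adjMatrix ℝ i j * f j ≤ ∑ j, b * (if G.Adj i j then 1 else 0) := by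
        refine Finset.sum_le_sum fun j _ => ?_
        by_cases h : G.Adj i j <;> simp [h, hf]
    _ = b * G.degree i := by rw [← Finset.mul_sum, G.degree_eq_sum_if_adj]
    _ ≤ b * G.maxDegree := by gcongr; exact_mod_cast G.degree_le_maxDegree i

theorem weightedLaplacian_adjMatrix_mul (u : V → V → ℝ) (y : V → ℝ) (i : V) :
    weightedLaplacian (fun i j => G.adjMatrix ℝ i j * u i j) y i
      = -∑ j ∈ G.neighborFinset i, u i j * (y j - y i) := by
  rw [← G.adjMatrix_mulVec_apply, weightedLaplacian, Matrix.mulVec, dotProduct,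
    ← Finset.sum_neg_distrib]
  exact Finset.sum_congr rfl fun j _ => by ring

variable {G}

theorem Connected.dirichletForm_adjMatrix_pos (hG : G.Connected) {y : V → ℝ}
    (hsum : ∑ i, y i = 0) (hy : y ≠ 0) : 0 < dirichletForm (G.adjMatrix ℝ) y := by
  classical
  have hnonneg : 0 ≤ dirichletForm (G.adjMatrix ℝ) y :=
    Finset.sum_nonneg fun i _ => Finset.sum_nonneg fun j _ =>
      mul_nonneg (G.adjMatrix_nonneg i j) (sq_nonneg _)
  refine hnonneg.lt_of_ne fun h => hy ?_
  have hconst : ∀ i j, y i = y j :=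
    fun i j => (lapMatrix_toLinearMap₂'_apply'_eq_zero_iff_forall_reachable G y).mp
      (by rw [dirichletForm_adjMatrix] at h; linarith) i j (hG.preconnected i j)
  obtain ⟨i₀⟩ := hG.nonempty
  have hcard : (Fintype.card V : ℝ) ≠ 0 := Nat.cast_ne_zero.mpr (Fintype.card_pos_iff.mpr ⟨i₀⟩).ne'
  have hi₀ : y i₀ = 0 := by
    simp only [fun i => hconst i i₀, Finset.sum_const, Finset.card_univ, nsmul_eq_mul] at hsum
    exact (mul_eq_zero.mp hsum).resolve_left hcard
  ext i
  rw [hconst i i₀, hi₀, Pi.zero_apply]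

theorem Connected.exists_pos_mul_sum_sq_le_dirichletForm (hG : G.Connected) :
    ∃ c > 0, ∀ y : V → ℝ, ∑ i, y i = 0 → c * ∑ i, y i ^ 2 ≤ dirichletForm (G.adjMatrix ℝ) y := by
  obtain ⟨c, hc, hcQ⟩ := exists_pos_mul_sq_norm_le_of_homogeneous
    (S := {y : V → ℝ | ∑ i, y i = 0}) (isClosed_eq (by fun_prop) continuous_const)
    (fun t y hy => by simp_all [← Finset.mul_sum]) (continuous_dirichletForm _)
    (dirichletForm_smul _) fun y hy => hG.dirichletForm_adjMatrix_pos hy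
  have hcard : (0 : ℝ) < Fintype.card V := by
    have := hG.nonempty
    exact_mod_cast Fintype.card_pos
  refine ⟨c / Fintype.card V, div_pos hc hcard, fun y hy => ?_⟩
  calc c / Fintype.card V * ∑ i, y i ^ 2 ≤ c / Fintype.card V * (Fintype.card V * ‖y‖ ^ 2) :=
        mul_le_mul_of_nonneg_left (sum_sq_le_card_mul_sq_norm y) (by positivity)
    _ = c * ‖y‖ ^ 2 := by field_simp
    _ ≤ _ := hcQ y hy

variable {w : ℕ → V → V → ℝ} {β η : ℝ}

theorem Connected.tendsto_zero_of_weightedLaplacian_step (hG : G.Connected)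
    (hw_symm : ∀ k i j, w k i j = w k j i) (hrow : ∀ k i, ∑ j, w k i j ≤ β) (hβ : β < 1)
    (hη : 0 < η) (hlow : ∀ k i j, η * G.adjMatrix ℝ i j ≤ w k i j) {y : ℕ → V → ℝ}
    (hy : ∀ k i, y (k + 1) i = y k i - weightedLaplacian (w k) (y k) i)
    (hy₀ : ∑ i, y 0 i = 0) (i : V) : Tendsto (fun k => y k i) atTop (𝓝 0) := by
  have hw : ∀ k i j, 0 ≤ w k i j := fun k i j =>
    (mul_nonneg hη.le (G.adjMatrix_nonneg i j)).trans (hlow k i j)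
  have hsum : ∀ k, ∑ i, y k i = 0 := by
    intro k
    induction k with
    | zero => exact hy₀
    | succ k ih => simp only [hy, Finset.sum_sub_distrib, ih, sum_weightedLaplacian (hw_symm k),
        sub_zero]
  obtain ⟨c, hc, hgap⟩ := hG.exists_pos_mul_sum_sq_le_dirichletForm
  have hstep : ∀ k, ∑ i, y (k + 1) i ^ 2 ≤ (1 - (1 - β) * η * c) * ∑ i, y k i ^ 2 := by
    intro k
    calc ∑ i, y (k + 1) i ^ 2
        ≤ ∑ i, y k i ^ 2 - (1 - β) * dirichletForm (w k) (y k) := by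
          simp only [hy]
          exact sum_sq_sub_weightedLaplacian_le (hw_symm k) (hw k) (hrow k) (y k)
      _ ≤ ∑ i, y k i ^ 2 - (1 - β) * (η * (c * ∑ i, y k i ^ 2)) := by
          gcongr
          exact (mul_le_mul_of_nonneg_left (hgap (y k) (hsum k)) hη.le).trans
            (mul_dirichletForm_le (hlow k) (y k))
      _ = (1 - (1 - β) * η * c) * ∑ i, y k i ^ 2 := by ring
  have hV := tendsto_zero_of_le_mul_of_lt_one
    (fun k => Finset.sum_nonneg fun i _ => sq_nonneg (y k i))
    (by nlinarith [mul_pos (mul_pos (sub_pos.mpr hβ) hη) hc]) hstep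
  have hsq : Tendsto (fun k => y k i ^ 2) atTop (𝓝 0) :=
    squeeze_zero (fun k => sq_nonneg _) (fun k => Finset.single_le_sum
      (f := fun j => y k j ^ 2) (fun j _ => sq_nonneg _) (Finset.mem_univ i)) hV
  rw [tendsto_zero_iff_abs_tendsto_zero]
  simpa [Function.comp_def, Real.sqrt_sq_eq_abs] using hsq.sqrt

theorem Connected.tendsto_average_of_weightedLaplacian_step (hG : G.Connected)
    (hw_symm : ∀ k i j, w k i j = w k j i) (hrow : ∀ k i, ∑ j, w k i j ≤ β) (hβ : β < 1)
    (hη : 0 < η) (hlow : ∀ k i j, η * G.adjMatrix ℝ i j ≤ w k i j) {x : ℕ → V → ℝ}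
    (hx : ∀ k i, x (k + 1) i = x k i - weightedLaplacian (w k) (x k) i) (i : V) :
    Tendsto (fun k => x k i) atTop (𝓝 ((Fintype.card V : ℝ)⁻¹ * ∑ j, x 0 j)) := by
  set s := (Fintype.card V : ℝ)⁻¹ * ∑ j, x 0 j
  have hcard : (Fintype.card V : ℝ) ≠ 0 := by
    have := hG.nonempty
    exact Nat.cast_ne_zero.mpr Fintype.card_ne_zero
  have h := hG.tendsto_zero_of_weightedLaplacian_step hw_symm hrow hβ hη hlow
    (y := fun k i => x k i - s) (fun k i => by rw [weightedLaplacian_sub_const, hx]; ring)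
    (by simp [Finset.sum_sub_distrib, s, mul_inv_cancel_left₀ hcard]) i
  simpa using h.add_const s

end SimpleGraph

theorem dt_average_consensus_general
    (n : ℕ)
    (G : SimpleGraph (Fin n)) [DecidableRel G.Adj]
    (hconn : G.Connected)
    (x : ℕ → Fin n → ℝ)
    (a : ℕ → Fin n → Fin n → ℝ)
    (ha_symm : ∀ k i j, a k i j = a k j i)
    (δ abar : ℝ) (hδ : 0 < δ) (hδa : δ ≤ abar) (habar : abar < 1)
    (hbound : ∀ k i j, G.Adj i j → δ ≤ a k i j ∧ a k i j ≤ abar)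
    (ε : ℝ) (hε : 0 < ε) (hεΔ : ε < 1 / (G.maxDegree : ℝ))
    (hdyn : ∀ i k, x (k + 1) i =
      x k i + ε * ∑ j ∈ G.neighborFinset i, a k i j * (x k j - x k i)) :
    ∀ i, Tendsto (fun k => x k i) atTop
      (𝓝 ((1 / (n : ℝ)) * ∑ j, x 0 j)) := by
  -- `1 / 0 = 0`, so `hεΔ` also excludes `Δ = 0`.
  have hΔ : 0 < (G.maxDegree : ℝ) := by
    by_contra h
    rw [le_antisymm (not_lt.mp h) (Nat.cast_nonneg _), div_zero] at hεΔ
    linarith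
  have hεΔ' : ε * G.maxDegree < 1 := by rwa [lt_div_iff₀ hΔ] at hεΔ
  intro i
  simpa using hconn.tendsto_average_of_weightedLaplacian_step
    (w := fun k i j => G.adjMatrix ℝ i j * (ε * a k i j)) (β := ε * abar * G.maxDegree)
    (η := ε * δ) (fun k i j => by simp [ha_symm k i j, G.adj_comm])
    (fun k i => G.sum_adjMatrix_mul_le_mul_maxDegree (mul_nonneg hε.le (hδ.le.trans hδa))
      fun j hij => mul_le_mul_of_nonneg_left (hbound k i j hij).2 hε.le)
    (by nlinarith) (by positivity)
    (fun k i j => by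
      by_cases h : G.Adj i j
      · simpa [h] using mul_le_mul_of_nonneg_left (hbound k i j h).1 hε.le
      · simp [h])
    (fun k i => by
      rw [hdyn, G.weightedLaplacian_adjMatrix_mul, Finset.mul_sum]
      simp only [mul_assoc, sub_neg_eq_add]) i

/-- Discrete-time average consensus with symmetric time-varying weights in
[δ, ā] with 0 < δ ≤ ā < 1, and step size 0 < ε < 1/Δ, Δ the maximum degree:
every node's state converges to the average of the initial states. -/
theorem dt_average_consensus
    (n : ℕ) (hn : 2 ≤ n)
    (G : SimpleGraph (Fin n)) [DecidableRel G.Adj]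
    (hconn : G.Connected)
    (x : ℕ → Fin n → ℝ)
    (a : ℕ → Fin n → Fin n → ℝ)
    (ha_symm : ∀ k i j, a k i j = a k j i)
    (δ abar : ℝ) (hδ : 0 < δ) (hδa : δ ≤ abar) (habar : abar < 1)
    (hbound : ∀ k i j, G.Adj i j → δ ≤ a k i j ∧ a k i j ≤ abar)
    (ε : ℝ) (hε : 0 < ε) (hεΔ : ε < 1 / (G.maxDegree : ℝ))
    (hdyn : ∀ i k, x (k + 1) i =
      x k i + ε * ∑ j ∈ G.neighborFinset i, a k i j * (x k j - x k i)) :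
    ∀ i, Tendsto (fun k => x k i) atTop
      (𝓝 ((1 / (n : ℝ)) * ∑ j, x 0 j)) :=
  dt_average_consensus_general n G hconn x a ha_symm δ abar hδ hδa habar hbound ε hε hεΔ hdyn
end

section
/- Under the discrete-time weighted-average consensus update rule x_i[k+1] = x_i[k] + (ε/w_i)·Σ_{j ∈ N_i} a_ij^(k)·(x_j[k] − x_i[k]), with positive node weights w_i, symmetric time-varying coupling weights bounded between positive constants δ and ā < 1 on every edge, and step size ε satisfying 0 < ε < (min_i w_i)/Δ where Δ is the maximum degree, every node's state converges as k → ∞ to the weighted average of the initial states: lim_{k→∞} x_i[k] = (Σ_{j=1}^n w_j x_j[0]) / (Σ_{j=1}^n w_j) for every node i. -/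
/-!
Each update is `x[k+1] = P_k x[k]` with `P_k = I - ε W⁻¹ L_k`, a row-stochastic matrix whose
diagonal entries and entries along edges are all at least `θ = min (1 - ā) (ε δ / ∑ w) > 0`.
Hence the maximum of the states never increases and the minimum never decreases; following a path
of length `< n` from any node to a node where the minimum is attained, the gap to the maximum
shrinks by a factor `θ` per step, so every `n` steps `max - min` contracts by `1 - θ ^ n` and all
states converge to a common limit. Symmetry of the couplings gives `w ᵥ* P_k = w`, so the weighted
sum `∑ w_i x_i[k]` is conserved, and this identifies the limit.
-/

open Filter Topology Finset Matrix

lemma tendsto_zero_of_antitone_of_le_mul {D : ℕ → ℝ} {q : ℝ} {d : ℕ} (hD : Antitone D)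
    (hD0 : ∀ k, 0 ≤ D k) (hq : q < 1) (hd : ∀ k, D (k + d) ≤ q * D k) :
    Tendsto D atTop (𝓝 0) := by
  have hbdd : BddBelow (Set.range D) := ⟨0, by rintro _ ⟨k, rfl⟩; exact hD0 k⟩
  have hlim := tendsto_atTop_ciInf hD hbdd
  have hshift : Tendsto (fun k => D (k + d)) atTop (𝓝 (⨅ k, D k)) :=
    (tendsto_add_atTop_iff_nat d).2 hlim
  have hle : ⨅ k, D k ≤ q * ⨅ k, D k :=
    le_of_tendsto_of_tendsto' hshift (hlim.const_mul q) hd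
  have hnonneg : 0 ≤ ⨅ k, D k := le_ciInf hD0
  rwa [show ⨅ k, D k = 0 by nlinarith] at hlim

variable {V : Type*} [Fintype V] [DecidableEq V]

namespace Matrix

variable {P : Matrix V V ℝ} {y : V → ℝ} {b : ℝ}

lemma mulVec_le_sub_mul_of_mem_rowStochastic (hP : P ∈ rowStochastic ℝ V)
    (hy : ∀ j, y j ≤ b) (i j : V) : (P *ᵥ y) i ≤ b - P i j * (b - y j) := by
  have hsum : b - (P *ᵥ y) i = ∑ l, P i l * (b - y l) := by
    simp only [mulVec, dotProduct, mul_sub, sum_sub_distrib, ← sum_mul,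
      sum_row_of_mem_rowStochastic hP, one_mul]
  have hterm : P i j * (b - y j) ≤ ∑ l, P i l * (b - y l) :=
    single_le_sum (f := fun l => P i l * (b - y l))
      (fun l _ => mul_nonneg (nonneg_of_mem_rowStochastic hP) (sub_nonneg.2 (hy l)))
      (mem_univ j)
  linarith

lemma mulVec_le_of_mem_rowStochastic (hP : P ∈ rowStochastic ℝ V) (hy : ∀ j, y j ≤ b)
    (i : V) : (P *ᵥ y) i ≤ b :=
  (mulVec_le_sub_mul_of_mem_rowStochastic hP hy i i).trans <|
    sub_le_self _ (mul_nonneg (nonneg_of_mem_rowStochastic hP) (sub_nonneg.2 (hy i)))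

lemma le_mulVec_of_mem_rowStochastic (hP : P ∈ rowStochastic ℝ V) (hy : ∀ j, b ≤ y j)
    (i : V) : b ≤ (P *ᵥ y) i := by
  have := mulVec_le_of_mem_rowStochastic hP (y := -y) (b := -b) (fun j => neg_le_neg (hy j)) i
  rwa [mulVec_neg, Pi.neg_apply, neg_le_neg_iff] at this

variable [Nonempty V] {P : ℕ → Matrix V V ℝ} {x : ℕ → V → ℝ}

lemma antitone_iSup_of_mem_rowStochastic (hP : ∀ k, P k ∈ rowStochastic ℝ V)
    (hx : ∀ k, x (k + 1) = P k *ᵥ x k) : Antitone fun k => ⨆ i, x k i :=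
  antitone_nat_of_succ_le fun k => ciSup_le fun i => by
    rw [hx]
    exact mulVec_le_of_mem_rowStochastic (hP k) (le_ciSup (Finite.bddAbove_range _)) i

lemma monotone_iInf_of_mem_rowStochastic (hP : ∀ k, P k ∈ rowStochastic ℝ V)
    (hx : ∀ k, x (k + 1) = P k *ᵥ x k) : Monotone fun k => ⨅ i, x k i :=
  monotone_nat_of_le_succ fun k => le_ciInf fun i => by
    rw [hx]
    exact le_mulVec_of_mem_rowStochastic (hP k) (ciInf_le (Finite.bddBelow_range _)) i

end Matrix

namespace SimpleGraph

structure IsMixingMatrix (G : SimpleGraph V) (θ : ℝ) (P : Matrix V V ℝ) : Prop where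
  mem_rowStochastic : P ∈ rowStochastic ℝ V
  le_diag : ∀ i, θ ≤ P i i
  le_of_adj : ∀ ⦃i j⦄, G.Adj i j → θ ≤ P i j

variable {G : SimpleGraph V} {θ : ℝ}

lemma IsMixingMatrix.mulVec_le {P : Matrix V V ℝ} (hP : G.IsMixingMatrix θ P) {y : V → ℝ} {b : ℝ}
    (hy : ∀ l, y l ≤ b) {i j : V} (hij : j = i ∨ G.Adj i j) :
    (P *ᵥ y) i ≤ b - θ * (b - y j) := by
  have hθ : θ ≤ P i j := by
    rcases hij with rfl | hadj
    exacts [hP.le_diag j, hP.le_of_adj hadj]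
  have := mulVec_le_sub_mul_of_mem_rowStochastic hP.mem_rowStochastic hy i j
  nlinarith [hy j]

variable {P : ℕ → Matrix V V ℝ} {x : ℕ → V → ℝ}

lemma le_iSup_sub_pow_mul_of_walk [Nonempty V] (hP : ∀ k, G.IsMixingMatrix θ (P k))
    (hθ : 0 ≤ θ) (hx : ∀ k, x (k + 1) = P k *ᵥ x k) (k : ℕ) {t : V} :
    ∀ s {i : V} (p : G.Walk i t), p.length ≤ s →
      x (k + s) i ≤ (⨆ l, x k l) - θ ^ s * ((⨆ l, x k l) - x k t) := by
  intro s
  induction s with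
  | zero =>
    intro i p hp
    obtain rfl := Walk.eq_of_length_eq_zero (Nat.le_zero.1 hp)
    simp
  | succ s ih =>
    intro i p hp
    obtain ⟨j, hij, q, hq⟩ : ∃ j, (j = i ∨ G.Adj i j) ∧ ∃ q : G.Walk j t, q.length ≤ s := by
      cases p with
      | nil => exact ⟨_, Or.inl rfl, Walk.nil, Nat.zero_le s⟩
      | cons h q => exact ⟨_, Or.inr h, q, by simpa using hp⟩
    have hsup : ∀ l, x (k + s) l ≤ ⨆ l, x k l := fun l =>
      (le_ciSup (Finite.bddAbove_range _) l).trans <|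
        antitone_iSup_of_mem_rowStochastic (fun k => (hP k).mem_rowStochastic) hx (k.le_add_right s)
    have hstep := (hP (k + s)).mulVec_le hsup hij
    rw [← hx] at hstep
    have := mul_le_mul_of_nonneg_left (ih q hq) hθ
    rw [← add_assoc, pow_succ]
    nlinarith

lemma iSup_sub_iInf_add_card_le (hG : G.Connected) (hP : ∀ k, G.IsMixingMatrix θ (P k))
    (hθ : 0 ≤ θ) (hx : ∀ k, x (k + 1) = P k *ᵥ x k) (k : ℕ) :
    (⨆ i, x (k + Fintype.card V) i) - ⨅ i, x (k + Fintype.card V) i ≤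
      (1 - θ ^ Fintype.card V) * ((⨆ i, x k i) - ⨅ i, x k i) := by
  have : Nonempty V := hG.nonempty
  obtain ⟨t, ht⟩ := exists_eq_ciInf_of_finite (f := x k)
  have hsup : ⨆ i, x (k + Fintype.card V) i ≤
      (⨆ i, x k i) - θ ^ Fintype.card V * ((⨆ i, x k i) - ⨅ i, x k i) := by
    refine ciSup_le fun i => ?_
    obtain ⟨p⟩ := hG.preconnected i t
    rw [← ht]
    exact le_iSup_sub_pow_mul_of_walk hP hθ hx k _ p.toPath p.toPath.2.length_lt.le
  have hinf := monotone_iInf_of_mem_rowStochastic (fun k => (hP k).mem_rowStochastic) hx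
    (k.le_add_right (Fintype.card V))
  linarith

theorem exists_tendsto_of_isMixingMatrix (hG : G.Connected) (hP : ∀ k, G.IsMixingMatrix θ (P k))
    (hθ : 0 < θ) (hx : ∀ k, x (k + 1) = P k *ᵥ x k) :
    ∃ L, ∀ i, Tendsto (fun k => x k i) atTop (𝓝 L) := by
  have : Nonempty V := hG.nonempty
  have hstoch k := (hP k).mem_rowStochastic
  set S := fun k => ⨆ i, x k i
  set I := fun k => ⨅ i, x k i
  have hxS k i : x k i ≤ S k := le_ciSup (Finite.bddAbove_range _) i
  have hIx k i : I k ≤ x k i := ciInf_le (Finite.bddBelow_range _) i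
  have hI : Monotone I := monotone_iInf_of_mem_rowStochastic hstoch hx
  have hS : Antitone S := antitone_iSup_of_mem_rowStochastic hstoch hx
  have hspread : Tendsto (S - I) atTop (𝓝 0) :=
    tendsto_zero_of_antitone_of_le_mul (fun _ _ h => sub_le_sub (hS h) (hI h))
      (fun k => sub_nonneg.2 ((hIx k (Classical.arbitrary V)).trans (hxS k _)))
      (sub_lt_self 1 (pow_pos hθ _)) (iSup_sub_iInf_add_card_le hG hP hθ.le hx)
  have hIlim : Tendsto I atTop (𝓝 (⨆ k, I k)) :=
    tendsto_atTop_ciSup hI ⟨S 0, by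
      rintro _ ⟨k, rfl⟩
      exact (hIx k (Classical.arbitrary V)).trans ((hxS k _).trans (hS k.zero_le))⟩
  have hSlim : Tendsto S atTop (𝓝 (⨆ k, I k)) := by
    simpa using hIlim.add hspread
  exact ⟨_, fun i => tendsto_of_tendsto_of_tendsto_of_le_of_le hIlim hSlim (hIx · i) (hxS · i)⟩

theorem tendsto_dotProduct_div_sum_of_isMixingMatrix (hG : G.Connected)
    (hP : ∀ k, G.IsMixingMatrix θ (P k)) (hθ : 0 < θ) {w : V → ℝ} (hw : ∑ j, w j ≠ 0)
    (hwP : ∀ k, w ᵥ* P k = w) (hx : ∀ k, x (k + 1) = P k *ᵥ x k) (i : V) :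
    Tendsto (fun k => x k i) atTop (𝓝 ((w ⬝ᵥ x 0) / ∑ j, w j)) := by
  obtain ⟨L, hL⟩ := exists_tendsto_of_isMixingMatrix hG hP hθ hx
  have hinv k : w ⬝ᵥ x k = w ⬝ᵥ x 0 := by
    induction k with
    | zero => rfl
    | succ k ih => rw [hx, dotProduct_mulVec, hwP, ih]
  have hlim : Tendsto (fun k => w ⬝ᵥ x k) atTop (𝓝 (∑ j, w j * L)) :=
    tendsto_finsetSum _ fun j _ => (hL j).const_mul (w j)
  simp only [hinv, tendsto_const_nhds_iff, ← sum_mul] at hlim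
  rw [hlim, mul_div_cancel_left₀ _ hw]
  exact hL i

section ConsensusMatrix

variable (G) [DecidableRel G.Adj]

/-- `I - ε W⁻¹ L`, with `W = diagonal w` and `L` the Laplacian of `G` with edge weights `c`. -/
noncomputable def consensusMatrix (ε : ℝ) (w : V → ℝ) (c : V → V → ℝ) : Matrix V V ℝ :=
  of fun i j => (if i = j then 1 - ε / w i * ∑ l ∈ G.neighborFinset i, c i l else 0) +
    if G.Adj i j then ε / w i * c i j else 0

variable {G}

lemma consensusMatrix_mulVec (ε : ℝ) (w : V → ℝ) (c : V → V → ℝ) (y : V → ℝ) (i : V) :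
    (G.consensusMatrix ε w c *ᵥ y) i =
      y i + ε / w i * ∑ j ∈ G.neighborFinset i, c i j * (y j - y i) := by
  simp only [consensusMatrix, mulVec, dotProduct, of_apply, add_mul, ite_mul, zero_mul,
    sum_add_distrib, sum_ite_eq, mem_univ, if_true, ← sum_filter, ← neighborFinset_eq_filter]
  simp only [mul_sub, sum_sub_distrib, ← sum_mul, mul_assoc, ← mul_sum]
  ring

lemma vecMul_consensusMatrix (ε : ℝ) {w : V → ℝ} (hw : ∀ i, w i ≠ 0) {c : V → V → ℝ}
    (hc : ∀ i j, c i j = c j i) : w ᵥ* G.consensusMatrix ε w c = w := by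
  funext j
  have hcol : ∑ i, w i * (if G.Adj i j then ε / w i * c i j else 0) =
      ε * ∑ l ∈ G.neighborFinset j, c j l := by
    simp only [mul_ite, mul_zero, ← sum_filter, mul_sum]
    refine sum_congr (by ext; simp [adj_comm]) fun i _ => ?_
    rw [hc]
    field_simp [hw i]
  simp only [vecMul, dotProduct, consensusMatrix, of_apply, mul_add, sum_add_distrib]
  rw [hcol]
  simp only [mul_ite, mul_zero, sum_ite_eq', mem_univ, if_true]
  field_simp [hw j]
  ring

lemma isMixingMatrix_consensusMatrix {ε δ abar : ℝ} {w : V → ℝ} {c : V → V → ℝ}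
    (hw : ∀ i, 0 < w i) (hε : 0 ≤ ε) (hεw : ∀ i, ε * G.maxDegree ≤ w i) (hδ : 0 ≤ δ)
    (hδa : δ ≤ abar) (habar : abar ≤ 1) (hc : ∀ i j, G.Adj i j → δ ≤ c i j ∧ c i j ≤ abar) :
    G.IsMixingMatrix (min (1 - abar) (ε * δ / ∑ j, w j)) (G.consensusMatrix ε w c) := by
  have hdiag i : 1 - abar ≤ G.consensusMatrix ε w c i i := by
    have hsum : ∑ l ∈ G.neighborFinset i, c i l ≤ G.maxDegree * abar :=
      calc ∑ l ∈ G.neighborFinset i, c i l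
          ≤ ∑ _l ∈ G.neighborFinset i, abar :=
            sum_le_sum fun l hl => (hc i l ((mem_neighborFinset G i l).1 hl)).2
        _ = G.degree i * abar := by rw [sum_const, card_neighborFinset_eq_degree, nsmul_eq_mul]
        _ ≤ G.maxDegree * abar := by
          gcongr
          · linarith
          · exact G.degree_le_maxDegree i
    have : ε / w i * ∑ l ∈ G.neighborFinset i, c i l ≤ abar := by
      rw [div_mul_eq_mul_div, div_le_iff₀ (hw i)]
      nlinarith [hεw i]
    simp only [consensusMatrix, of_apply, if_true, G.loopless.irrefl, if_false, add_zero]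
    linarith
  have hadj i j (h : G.Adj i j) : ε * δ / ∑ j, w j ≤ G.consensusMatrix ε w c i j := by
    have hwi : w i ≤ ∑ j, w j := single_le_sum (fun j _ => (hw j).le) (mem_univ i)
    simp only [consensusMatrix, of_apply, h.ne, h, if_true, if_false, zero_add]
    calc ε * δ / ∑ j, w j ≤ ε * δ / w i := div_le_div_of_nonneg_left (by positivity) (hw i) hwi
      _ ≤ ε / w i * c i j := by
        rw [div_mul_eq_mul_div]
        exact div_le_div_of_nonneg_right (mul_le_mul_of_nonneg_left (hc i j h).1 hε) (hw i).le
  have hθ : 0 ≤ min (1 - abar) (ε * δ / ∑ j, w j) :=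
    le_min (by linarith) (div_nonneg (mul_nonneg hε hδ) (sum_nonneg fun j _ => (hw j).le))
  refine ⟨⟨fun i j => ?_, funext fun i => ?_⟩, fun i => (min_le_left _ _).trans (hdiag i),
    fun i j h => (min_le_right _ _).trans (hadj i j h)⟩
  · by_cases hij : i = j
    · subst hij; exact hθ.trans ((min_le_left _ _).trans (hdiag i))
    by_cases h : G.Adj i j
    · exact hθ.trans ((min_le_right _ _).trans (hadj i j h))
    simp [consensusMatrix, hij, h]
  · simp [consensusMatrix_mulVec]

end ConsensusMatrix

end SimpleGraph

/-- Discrete-time weighted-average consensus with positive node weights,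
symmetric time-varying coupling weights in [δ, ā] with 0 < δ ≤ ā < 1, and
step size 0 < ε < (min_i w_i)/Δ: every node's state converges to the weighted
average of the initial states. -/
theorem dt_weighted_average_consensus
    (n : ℕ) (hn : 2 ≤ n)
    (G : SimpleGraph (Fin n)) [DecidableRel G.Adj]
    (hconn : G.Connected)
    (w : Fin n → ℝ) (hw : ∀ i, 0 < w i)
    (x : ℕ → Fin n → ℝ)
    (a : ℕ → Fin n → Fin n → ℝ)
    (ha_symm : ∀ k i j, a k i j = a k j i)
    (δ abar : ℝ) (hδ : 0 < δ) (hδa : δ ≤ abar) (habar : abar < 1)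
    (hbound : ∀ k i j, G.Adj i j → δ ≤ a k i j ∧ a k i j ≤ abar)
    (ε : ℝ) (hε : 0 < ε)
    (hεΔ : ε < (Finset.univ.inf' (Finset.univ_nonempty_iff.mpr ⟨⟨0, by omega⟩⟩) w)
              / (G.maxDegree : ℝ))
    (hdyn : ∀ i k, x (k + 1) i =
      x k i + (ε / w i) * ∑ j ∈ G.neighborFinset i, a k i j * (x k j - x k i)) :
    ∀ i, Tendsto (fun k => x k i) atTop
      (𝓝 ((∑ j, w j * x 0 j) / (∑ j, w j))) := by
  have : Nonempty (Fin n) := hconn.nonempty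
  have hΔ : 0 < (G.maxDegree : ℝ) := by
    by_contra h
    rw [le_antisymm (not_lt.1 h) G.maxDegree.cast_nonneg, div_zero] at hεΔ
    linarith
  have hεw i : ε * G.maxDegree ≤ w i := ((lt_div_iff₀ hΔ).1 hεΔ).le.trans (inf'_le w (mem_univ i))
  have hwsum : 0 < ∑ j, w j := sum_pos (fun j _ => hw j) univ_nonempty
  have hθ : 0 < min (1 - abar) (ε * δ / ∑ j, w j) :=
    lt_min (by linarith) (div_pos (mul_pos hε hδ) hwsum)
  have hx k : x (k + 1) = G.consensusMatrix ε w (a k) *ᵥ x k :=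
    funext fun i => by rw [hdyn, SimpleGraph.consensusMatrix_mulVec]
  exact G.tendsto_dotProduct_div_sum_of_isMixingMatrix hconn
    (fun k => SimpleGraph.isMixingMatrix_consensusMatrix hw hε.le hεw hδ.le hδa habar.le (hbound k))
    hθ hwsum.ne'
    (fun k => SimpleGraph.vecMul_consensusMatrix ε (fun i => (hw i).ne') (ha_symm k)) hx
end

section
/- Paillier decryption recovers the plaintext: let p and q be distinct primes, n = pq, λ = (p−1)(q−1), and suppose gcd(n, λ) = 1 so that λ has a modular inverse μ modulo n (λ·μ ≡ 1 mod n). Let m be an integer with 0 ≤ m < n and r an integer with gcd(r, n) = 1, and let c = (n+1)ᵐ·rⁿ mod n² be the ciphertext. Then n divides (c^λ mod n²) − 1, and L(c^λ mod n²)·μ mod n = m, where L(u) = (u − 1)/n. -/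
lemma paillier_binom (n k : ℕ) : (n + 1) ^ k ≡ 1 + k * n [MOD n ^ 2] := by
  induction k with
  | zero => simp [Nat.ModEq]
  | succ k ih =>
    have h1 : (n + 1) ^ (k + 1) ≡ (1 + k * n) * (n + 1) [MOD n ^ 2] := by
      rw [pow_succ]; exact ih.mul_right _
    have h2 : (1 + k * n) * (n + 1) = 1 + (k + 1) * n + k * n ^ 2 := by ring
    have h3 : 1 + (k + 1) * n + k * n ^ 2 ≡ 1 + (k + 1) * n + 0 [MOD n ^ 2] :=
      Nat.ModEq.add_left _ ((Nat.modEq_zero_iff_dvd).2 ⟨k, by ring⟩)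
    calc (n + 1) ^ (k + 1) ≡ (1 + k * n) * (n + 1) [MOD n ^ 2] := h1
      _ = 1 + (k + 1) * n + k * n ^ 2 := h2
      _ ≡ 1 + (k + 1) * n + 0 [MOD n ^ 2] := h3
      _ = 1 + (k + 1) * n := by ring

/-- Correctness of Paillier decryption: with n = pq for distinct primes p, q,
λ = (p−1)(q−1) coprime to n, μ the inverse of λ modulo n, a message m < n and
randomness r coprime to n, the ciphertext c = (n+1)^m · r^n mod n² satisfies
n ∣ (c^λ mod n²) − 1 and L(c^λ mod n²)·μ mod n = m, where L(u) = (u − 1)/n. -/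
theorem paillier_decryption_correct
    (p q : ℕ) (hp : p.Prime) (hq : q.Prime) (hpq : p ≠ q)
    (n lam mu : ℕ)
    (hn : n = p * q)
    (hlam : lam = (p - 1) * (q - 1))
    (hcoprime : Nat.gcd n lam = 1)
    (hmu : lam * mu ≡ 1 [MOD n])
    (m : ℕ) (hm : m < n)
    (r : ℕ) (hr : Nat.gcd r n = 1)
    (c : ℕ) (hc : c = ((n + 1) ^ m * r ^ n) % n ^ 2) :
    n ∣ (c ^ lam % n ^ 2) - 1 ∧
    ((c ^ lam % n ^ 2 - 1) / n * mu) % n = m := by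
  have hn2 : 2 ≤ n := by
    rw [hn]
    calc 2 ≤ 2 * 2 := by norm_num
    _ ≤ p * q := Nat.mul_le_mul hp.two_le hq.two_le
  have hnpos : 0 < n := by omega
  -- totient of n^2
  have hcop_pq : Nat.Coprime p q := (Nat.coprime_primes hp hq).2 hpq
  have htot : Nat.totient (n ^ 2) = n * lam := by
    have h1 : n ^ 2 = p ^ 2 * q ^ 2 := by rw [hn]; ring
    have hcp2 : Nat.Coprime (p^2) (q^2) := Nat.Coprime.pow 2 2 hcop_pq
    rw [h1, Nat.totient_mul hcp2,
        Nat.totient_prime_pow hp (by norm_num : 0 < 2),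
        Nat.totient_prime_pow hq (by norm_num : 0 < 2), hn, hlam]
    ring
  -- Euler: r^(n*lam) ≡ 1 mod n^2
  have hrcop : Nat.Coprime r (n ^ 2) := (Nat.coprime_iff_gcd_eq_one.2 hr).pow_right _
  have heuler : r ^ (n * lam) ≡ 1 [MOD n ^ 2] := by
    rw [← htot]; exact Nat.ModEq.pow_totient hrcop
  -- c ^ lam ≡ 1 + (m*lam)*n mod n^2
  have hc1 : c ^ lam ≡ ((n + 1) ^ m * r ^ n) ^ lam [MOD n ^ 2] := by
    rw [hc]; exact (Nat.mod_modEq _ _).pow _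
  have hc2 : ((n + 1) ^ m * r ^ n) ^ lam = (n + 1) ^ (m * lam) * r ^ (n * lam) := by
    rw [mul_pow, ← pow_mul, ← pow_mul]
  have hc3 : c ^ lam ≡ (1 + m * lam * n) * 1 [MOD n ^ 2] := by
    calc c ^ lam ≡ (n + 1) ^ (m * lam) * r ^ (n * lam) [MOD n ^ 2] := by
          rw [← hc2]; exact hc1
      _ ≡ (1 + m * lam * n) * 1 [MOD n ^ 2] :=
          (paillier_binom n (m * lam)).mul heuler
  set s := m * lam % n with hs
  have hsplit : m * lam = n * (m * lam / n) + s := (Nat.div_add_mod _ _).symm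
  have hc4 : c ^ lam ≡ 1 + s * n [MOD n ^ 2] := by
    have : (1 + m * lam * n) ≡ 1 + s * n + 0 [MOD n ^ 2] := by
      have heq : 1 + m * lam * n = 1 + s * n + (m * lam / n) * n ^ 2 := by
        conv_lhs => rw [hsplit]
        ring
      rw [heq]
      exact Nat.ModEq.add_left _ ((Nat.modEq_zero_iff_dvd).2 ⟨_, by ring⟩)
    calc c ^ lam ≡ (1 + m * lam * n) * 1 [MOD n ^ 2] := hc3
      _ = 1 + m * lam * n := by ring
      _ ≡ 1 + s * n + 0 [MOD n ^ 2] := this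
      _ = 1 + s * n := by ring
  have hslt : s < n := Nat.mod_lt _ hnpos
  have hlt : 1 + s * n < n ^ 2 := by nlinarith
  have hmod : c ^ lam % n ^ 2 = 1 + s * n := by
    have := hc4.symm  -- 1 + s*n ≡ c^lam
    calc c ^ lam % n ^ 2 = (1 + s * n) % n ^ 2 := hc4
      _ = 1 + s * n := Nat.mod_eq_of_lt hlt
  constructor
  · rw [hmod]; simp
  · rw [hmod]
    have hdiv : (1 + s * n - 1) / n = s := by
      simp [Nat.mul_div_cancel _ hnpos]
    rw [hdiv]
    have h1 : s * mu ≡ m * lam * mu [MOD n] := (Nat.mod_modEq _ _).mul_right _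
    have h2 : m * lam * mu ≡ m * 1 [MOD n] := by
      rw [mul_assoc]; exact hmu.mul_left m
    have : s * mu ≡ m [MOD n] := by
      calc s * mu ≡ m * lam * mu [MOD n] := h1
        _ ≡ m * 1 [MOD n] := h2
        _ = m := by ring
    calc s * mu % n = m % n := this
      _ = m := Nat.mod_eq_of_lt hm
end
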